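/- arXiv:2407.18073 — 3 statements merged into one kernel-verified Lean document; each statement's English description precedes it below -/
import Mathlib

section
/- Let A be a Banach–Tate ring and let M and N be ONable Banach A-modules with ON bases (e_i)_{i∈I} and (f_j)_{j∈J}. (i) For every continuous A-linear map φ:M→N with matrix (a_{i,j}): for each fixed i∈I one has lim_{j→∞}a_{i,j}=0 (for every ε>0 only finitely many j∈J satisfy |a_{i,j}|>ε); the set {|a_{i,j}|} is bounded; and ‖φ‖=sup_{i∈I,j∈J}|a_{i,j}|. (ii) Conversely, every family (a_{i,j})_{i∈I,j∈J} of elements of A satisfying these two conditions is the matrix of a unique continuous A-linear map φ:M→N, and this φ has norm ‖φ‖=sup_{i,j}|a_{i,j}|. -/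
open scoped Classical

universe u v w

/-- A (non-archimedean, submultiplicative) ring norm with values in `ℝ`. -/
structure IsRingNorm {A : Type*} [Ring A] (v : A → ℝ) : Prop where
  nonneg : ∀ a, 0 ≤ v a
  eq_zero_iff : ∀ a, v a = 0 ↔ a = 0
  map_one : v 1 = 1
  map_neg : ∀ a, v (-a) = v a
  add_le : ∀ a b, v (a + b) ≤ max (v a) (v b)
  mul_le : ∀ a b, v (a * b) ≤ v a * v b

theorem IsRingNorm.map_zero {A : Type*} [Ring A] {v : A → ℝ} (hv : IsRingNorm v) :
    v 0 = 0 := (hv.eq_zero_iff 0).mpr rfl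

/-- A norm on an `A`-module, compatible with a ring norm `v` on `A`. -/
structure IsModuleNorm {A : Type*} [Ring A] (v : A → ℝ) {M : Type*} [AddCommGroup M]
    [Module A M] (nm : M → ℝ) : Prop where
  nonneg : ∀ m, 0 ≤ nm m
  eq_zero_iff : ∀ m, nm m = 0 ↔ m = 0
  map_neg : ∀ m, nm (-m) = nm m
  add_le : ∀ m n, nm (m + n) ≤ max (nm m) (nm n)
  smul_le : ∀ (a : A) (m : M), nm (a • m) ≤ v a * nm m

/-- A sequence is Cauchy with respect to a norm. -/
def NormCauchy {M : Type*} [AddCommGroup M] (nm : M → ℝ) (s : ℕ → M) : Prop :=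
  ∀ ε : ℝ, 0 < ε → ∃ N : ℕ, ∀ i j : ℕ, N ≤ i → N ≤ j → nm (s i - s j) < ε

/-- A sequence converges to `x` with respect to a norm. -/
def NormLim {M : Type*} [AddCommGroup M] (nm : M → ℝ) (s : ℕ → M) (x : M) : Prop :=
  ∀ ε : ℝ, 0 < ε → ∃ N : ℕ, ∀ i : ℕ, N ≤ i → nm (s i - x) < ε

/-- Completeness: every Cauchy sequence converges. -/
def NormComplete {M : Type*} [AddCommGroup M] (nm : M → ℝ) : Prop :=
  ∀ s : ℕ → M, NormCauchy nm s → ∃ x : M, NormLim nm s x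

/-- Continuity of a map between modules equipped with norms. -/
def NormContinuous {M N : Type*} [AddCommGroup M] [AddCommGroup N]
    (nmM : M → ℝ) (nmN : N → ℝ) (f : M → N) : Prop :=
  ∀ m : M, ∀ ε : ℝ, 0 < ε → ∃ δ : ℝ, 0 < δ ∧
    ∀ m' : M, nmM (m' - m) < δ → nmN (f m' - f m) < ε

/-- A Banach–Tate ring: a complete normed ring containing a multiplicative
topologically nilpotent unit. -/
structure IsBanachTate {A : Type*} [Ring A] (v : A → ℝ) : Prop where
  isRingNorm : IsRingNorm v
  complete : NormComplete v
  exists_unit : ∃ ϖ : A, IsUnit ϖ ∧ v ϖ < 1 ∧ ∀ b, v (ϖ * b) = v ϖ * v b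
/-- `cA v hv I` is the Banach `A`-module `c_A(I)` of functions `I → A` tending to zero:
for every `ε > 0` only finitely many `i` satisfy `v (f i) > ε`. -/
def cA {A : Type u} [Ring A] (v : A → ℝ) (hv : IsRingNorm v) (I : Type v) :
    Submodule A (I → A) where
  carrier := {f | ∀ ε : ℝ, 0 < ε → {i : I | ε < v (f i)}.Finite}
  add_mem' := by
    intro f g hf hg ε hε
    refine ((hf ε hε).union (hg ε hε)).subset ?_
    intro i hi
    simp only [Set.mem_setOf_eq, Pi.add_apply] at hi
    simp only [Set.mem_union, Set.mem_setOf_eq]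
    by_contra hc
    push_neg at hc
    have h := le_trans (hv.add_le (f i) (g i)) (max_le hc.1 hc.2)
    exact absurd hi (not_lt.mpr h)
  zero_mem' := by
    intro ε hε
    have : {i : I | ε < v ((0 : I → A) i)} = ∅ := by
      ext i
      simp only [Set.mem_setOf_eq, Pi.zero_apply, Set.mem_empty_iff_false, iff_false, not_lt,
        hv.map_zero]
      exact le_of_lt hε
    rw [this]; exact Set.finite_empty
  smul_mem' := by
    intro a f hf ε hε
    rcases eq_or_ne a 0 with rfl | ha
    · refine Set.finite_empty.subset ?_
      intro i hi
      simp only [Set.mem_setOf_eq, Pi.smul_apply, zero_smul, hv.map_zero] at hi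
      exact absurd hi (not_lt.mpr (le_of_lt hε))
    · have hva : 0 < v a := by
        rcases lt_or_eq_of_le (hv.nonneg a) with h | h
        · exact h
        · exact absurd ((hv.eq_zero_iff a).mp h.symm) ha
      refine (hf (ε / v a) (div_pos hε hva)).subset ?_
      intro i hi
      simp only [Set.mem_setOf_eq, Pi.smul_apply, smul_eq_mul] at hi
      simp only [Set.mem_setOf_eq]
      rw [div_lt_iff₀ hva]
      calc ε < v (a * f i) := hi
        _ ≤ v a * v (f i) := hv.mul_le a (f i)
        _ = v (f i) * v a := mul_comm _ _

/-- The norm on `c_A(I)`: the supremum (= maximum) of the norms of the values. -/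
noncomputable def cNorm {A : Type u} [Ring A] (v : A → ℝ) {hv : IsRingNorm v} {I : Type v}
    (f : cA v hv I) : ℝ :=
  ⨆ i : I, v ((f : I → A) i)

/-- The canonical `i`-th basis vector `e_i` of `c_A(I)`. -/
noncomputable def stdDelta {A : Type u} [Ring A] (v : A → ℝ) (hv : IsRingNorm v) {I : Type v} (i : I) :
    cA v hv I :=
  ⟨fun j => if j = i then 1 else 0, by
    intro ε hε
    refine (Set.finite_singleton i).subset ?_
    intro j hj
    simp only [Set.mem_setOf_eq] at hj
    simp only [Set.mem_singleton_iff]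
    by_contra hji
    rw [if_neg hji, hv.map_zero] at hj
    exact absurd hj (not_lt.mpr (le_of_lt hε))⟩
/-- A linear map has finite rank if its image is contained in a finitely generated
submodule of the target. -/
def FiniteRank {A : Type u} [Ring A] {M : Type v} {N : Type w} [AddCommGroup M] [Module A M]
    [AddCommGroup N] [Module A N] (f : M →ₗ[A] N) : Prop :=
  ∃ P : Submodule A N, P.FG ∧ LinearMap.range f ≤ P

/-- A continuous linear map is compact if it is a limit, in the operator norm, of
continuous finite rank maps. -/
def IsCompactOp {A : Type u} [Ring A] {M : Type v} {N : Type w} [AddCommGroup M] [Module A M]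
    [AddCommGroup N] [Module A N] (nmM : M → ℝ) (nmN : N → ℝ) (f : M →ₗ[A] N) : Prop :=
  NormContinuous nmM nmN f ∧
  ∀ ε : ℝ, 0 < ε → ∃ g : M →ₗ[A] N, NormContinuous nmM nmN g ∧ FiniteRank g ∧
    ∀ m : M, nmN (f m - g m) ≤ ε * nmM m

/-- The matrix coefficients `a_{i,j}` of a linear map `f : M → N`, with respect to
ON bases of `M` and `N` given by isomorphisms with `c_A(I)` and `c_A(J)`:
`f(e_i) = Σ_j a_{i,j} f_j`. -/
noncomputable def matrixCoef {A : Type u} [Ring A] (v : A → ℝ) (hv : IsRingNorm v)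
    {I : Type v} {J : Type v} {M N : Type v} [AddCommGroup M] [Module A M]
    [AddCommGroup N] [Module A N]
    (TM : M ≃ₗ[A] cA v hv I) (TN : N ≃ₗ[A] cA v hv J)
    (f : M →ₗ[A] N) (i : I) (j : J) : A :=
  ((TN (f (TM.symm (stdDelta v hv i))) : cA v hv J) : J → A) j

/-- The projection of `c_A(I)` onto the coordinates in a finite set `S`. -/
noncomputable def projCA {A : Type u} [Ring A] (v : A → ℝ) (hv : IsRingNorm v) {I : Type v}
    (S : Finset I) : cA v hv I →ₗ[A] cA v hv I where
  toFun f := ⟨fun i => if i ∈ S then (f : I → A) i else 0, by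
    intro ε hε
    refine (f.2 ε hε).subset ?_
    intro i hi
    simp only [Set.mem_setOf_eq] at hi ⊢
    by_cases h : i ∈ S
    · rwa [if_pos h] at hi
    · rw [if_neg h, hv.map_zero] at hi
      exact absurd hi (not_lt.mpr (le_of_lt hε))⟩
  map_add' f g := by
    apply Subtype.ext
    funext i
    by_cases h : i ∈ S <;> simp [h]
  map_smul' a f := by
    apply Subtype.ext
    funext i
    by_cases h : i ∈ S <;> simp [h]

/-- The projection `π_S : M → M` of an ONable Banach module onto the span of the
basis vectors indexed by a finite set `S`. -/
noncomputable def projON {A : Type u} [Ring A] (v : A → ℝ) (hv : IsRingNorm v)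
    {I : Type v} {M : Type v} [AddCommGroup M] [Module A M]
    (T : M ≃ₗ[A] cA v hv I) (S : Finset I) : M →ₗ[A] M :=
  T.symm.toLinearMap ∘ₗ projCA v hv S ∘ₗ T.toLinearMap

/-- The operator norm `‖φ‖ = sup_{m ≠ 0} ‖φ(m)‖ / ‖m‖` of a map between normed
modules. -/
noncomputable def opNorm {M N : Type*} [AddCommGroup M] [AddCommGroup N]
    (nmM : M → ℝ) (nmN : N → ℝ) (f : M → N) : ℝ :=
  sSup {r : ℝ | ∃ m : M, m ≠ 0 ∧ r = nmN (f m) / nmM m}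

/-!
In `c_A(I)` every `m` is the limit of its finite partial expansions `π_T m = ∑_{i ∈ T} m_i e_i`,
whose coefficients satisfy `|m_i| ≤ ‖m‖`; so by the ultrametric inequality a bounded linear map
with `‖φ(e_i)‖ ≤ K` for all `i` has `‖φ‖ ≤ K`. Taking `K = 0` for a difference of two maps gives
uniqueness, `K = sup |a_{i,j}|` the upper bound on the norm, and `‖e_i‖ = 1` the lower bound.
Conversely, for a bounded matrix the terms of `∑_i m_i φ(e_i)` tend to zero, so the series
converges in the complete ultrametric module `N`. Continuity implies boundedness because
scaling by integer powers of the multiplicative unit `ϖ` moves any nonzero vector into the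
annulus `|ϖ|δ ≤ ‖m‖ < δ`, on which continuity at `0` gives `‖φ m‖ < 1`.
-/

open Filter Topology

namespace IsRingNorm

variable {A : Type*} [Ring A] {v : A → ℝ}

theorem map_units_pos (hv : IsRingNorm v) (u : Aˣ) : 0 < v u := by
  refine (hv.nonneg u).lt_of_ne' fun h0 => ?_
  have hu : (u : A) = 0 := (hv.eq_zero_iff _).mp h0
  have := hv.map_one
  rw [← u.mul_inv, hu, zero_mul, hv.map_zero] at this
  exact zero_ne_one this

theorem map_units_zpow_mul (hv : IsRingNorm v) {u : Aˣ} (hu : ∀ b, v (u * b) = v u * v b)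
    (k : ℤ) (b : A) : v (↑(u ^ k) * b) = v u ^ k * v b := by
  have hq := (hv.map_units_pos u).ne'
  have hinv : ∀ b, v (↑u⁻¹ * b) = (v u)⁻¹ * v b := fun b => by
    rw [eq_inv_mul_iff_mul_eq₀ hq, ← hu, ← mul_assoc, u.mul_inv, one_mul]
  induction k using Int.induction_on generalizing b with
  | zero => simp
  | succ n ih => rw [zpow_add_one, Units.val_mul, mul_assoc, ih, hu, zpow_add_one₀ hq]; ring
  | pred n ih => rw [zpow_sub_one, Units.val_mul, mul_assoc, ih, hinv, zpow_sub_one₀ hq]; ring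

end IsRingNorm

namespace IsModuleNorm

variable {A : Type*} [Ring A] {v : A → ℝ} {M : Type*} [AddCommGroup M] [Module A M]
  {nm : M → ℝ}

theorem map_zero (h : IsModuleNorm v nm) : nm 0 = 0 := (h.eq_zero_iff 0).mpr rfl

theorem pos_of_ne_zero (h : IsModuleNorm v nm) {m : M} (hm : m ≠ 0) : 0 < nm m :=
  (h.nonneg m).lt_of_ne' fun h0 => hm ((h.eq_zero_iff m).mp h0)

theorem map_sub_le_max (h : IsModuleNorm v nm) (x y : M) : nm (x - y) ≤ max (nm x) (nm y) := by
  simpa only [sub_eq_add_neg, h.map_neg] using h.add_le x (-y)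

theorem sum_le {ι : Type*} (h : IsModuleNorm v nm) (s : Finset ι) {f : ι → M} {C : ℝ}
    (hC : 0 ≤ C) (hf : ∀ i ∈ s, nm (f i) ≤ C) : nm (∑ i ∈ s, f i) ≤ C := by
  classical
  induction s using Finset.induction with
  | empty => simpa [h.map_zero] using hC
  | insert i s hi ih =>
    rw [Finset.sum_insert hi]
    exact (h.add_le _ _).trans (max_le (hf i (s.mem_insert_self i))
      (ih fun k hk => hf k (Finset.mem_insert_of_mem hk)))

abbrev toNormedAddCommGroup (h : IsModuleNorm v nm) : NormedAddCommGroup M :=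
  AddGroupNorm.toNormedAddCommGroup
    { toFun := nm
      map_zero' := h.map_zero
      add_le' := fun x y => (h.add_le x y).trans
        (max_le (le_add_of_nonneg_right (h.nonneg y)) (le_add_of_nonneg_left (h.nonneg x)))
      neg' := h.map_neg
      eq_zero_of_map_eq_zero' := fun x => (h.eq_zero_iff x).mp }

theorem map_units_smul (hv : IsRingNorm v) (h : IsModuleNorm v nm) {w : Aˣ}
    (hw : ∀ b, v (w * b) = v w * v b) (x : M) : nm ((w : A) • x) = v w * nm x := by
  refine le_antisymm (h.smul_le _ _) ?_
  calc v w * nm x = v w * nm ((↑w⁻¹ : A) • (w : A) • x) := by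
        rw [smul_smul, Units.inv_mul, one_smul]
    _ ≤ v w * (v (↑w⁻¹ : A) * nm ((w : A) • x)) :=
        mul_le_mul_of_nonneg_left (h.smul_le _ _) (hv.nonneg _)
    _ = nm ((w : A) • x) := by rw [← mul_assoc, ← hw, Units.mul_inv, hv.map_one, one_mul]

theorem map_units_zpow_smul (hv : IsRingNorm v) (h : IsModuleNorm v nm) {u : Aˣ}
    (hu : ∀ b, v (u * b) = v u * v b) (k : ℤ) (x : M) :
    nm (((u ^ k : Aˣ) : A) • x) = v u ^ k * nm x := by
  have hk := hv.map_units_zpow_mul hu k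
  have hval : v ↑(u ^ k) = v u ^ k := by simpa [hv.map_one] using hk 1
  rw [h.map_units_smul hv (fun b => by rw [hk, hval]), hval]

end IsModuleNorm

section Bounded

variable {A : Type*} [Ring A] {v : A → ℝ} {M N : Type*} [AddCommGroup M] [Module A M]
  [AddCommGroup N] [Module A N] {nmM : M → ℝ} {nmN : N → ℝ}

def NormBounded (nmM : M → ℝ) (nmN : N → ℝ) (f : M → N) : Prop :=
  ∃ C : ℝ, 0 ≤ C ∧ ∀ m, nmN (f m) ≤ C * nmM m

theorem NormBounded.sub (hnmM : IsModuleNorm v nmM) (hnmN : IsModuleNorm v nmN) {f g : M → N}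
    (hf : NormBounded nmM nmN f) (hg : NormBounded nmM nmN g) : NormBounded nmM nmN (f - g) := by
  obtain ⟨C, hC, hfC⟩ := hf
  obtain ⟨D, hD, hgD⟩ := hg
  refine ⟨max C D, le_max_of_le_left hC, fun m => ?_⟩
  rw [max_mul_of_nonneg _ _ (hnmM.nonneg m)]
  exact (hnmN.map_sub_le_max _ _).trans (max_le_max (hfC m) (hgD m))

theorem NormBounded.normContinuous {φ : M →ₗ[A] N} (hφ : NormBounded nmM nmN φ) :
    NormContinuous nmM nmN φ := by
  obtain ⟨C, hC, hφC⟩ := hφ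
  refine fun m ε hε => ⟨ε / (C + 1), by positivity, fun m' hm' => ?_⟩
  rw [← map_sub]
  calc nmN (φ (m' - m)) ≤ C * nmM (m' - m) := hφC _
    _ ≤ C * (ε / (C + 1)) := by gcongr
    _ < ε := by
      rw [mul_div_assoc', div_lt_iff₀ (by positivity)]
      nlinarith

theorem normBounded_of_normContinuous (hA : IsBanachTate v) (hnmM : IsModuleNorm v nmM)
    (hnmN : IsModuleNorm v nmN) {φ : M →ₗ[A] N} (hφ : NormContinuous nmM nmN φ) :
    NormBounded nmM nmN φ := by
  obtain ⟨ϖ, hunit, hq1, hmul⟩ := hA.exists_unit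
  lift ϖ to Aˣ using hunit
  set q := v ϖ
  have hq0 : 0 < q := hA.isRingNorm.map_units_pos ϖ
  obtain ⟨δ, hδ, hφδ⟩ := hφ 0 1 one_pos
  refine ⟨(q * δ)⁻¹, by positivity, fun m => ?_⟩
  rcases eq_or_ne m 0 with rfl | hm
  · simp [hnmN.map_zero, hnmM.map_zero]
  have hr := hnmM.pos_of_ne_zero hm
  obtain ⟨n, hn_le, hn_lt⟩ := exists_mem_Ico_zpow (div_pos hr hδ) (one_lt_inv₀ hq0 |>.2 hq1)
  rw [inv_zpow, le_div_iff₀ hδ] at hn_le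
  rw [inv_zpow, div_lt_iff₀ hδ] at hn_lt
  set k := n + 1
  have hqk : 0 < q ^ k := zpow_pos hq0 k
  have hsmall : q ^ k * nmM m < δ :=
    calc q ^ k * nmM m < q ^ k * ((q ^ k)⁻¹ * δ) := by gcongr
      _ = δ := by field_simp
  have hlarge : q * δ ≤ q ^ k * nmM m :=
    calc q * δ = q ^ k * ((q ^ n)⁻¹ * δ) := by rw [zpow_add_one₀ hq0.ne']; field_simp
      _ ≤ q ^ k * nmM m := by gcongr
  have hφm : q ^ k * nmN (φ m) < 1 := by
    have := hφδ (((ϖ ^ k : Aˣ) : A) • m) (by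
      rwa [sub_zero, hnmM.map_units_zpow_smul hA.isRingNorm hmul])
    rwa [map_smul, map_zero, sub_zero, hnmN.map_units_zpow_smul hA.isRingNorm hmul] at this
  rw [inv_mul_eq_div, le_div_iff₀ (by positivity)]
  calc nmN (φ m) * (q * δ) ≤ nmN (φ m) * (q ^ k * nmM m) :=
        mul_le_mul_of_nonneg_left hlarge (hnmN.nonneg _)
    _ = q ^ k * nmN (φ m) * nmM m := by ring
    _ ≤ 1 * nmM m := mul_le_mul_of_nonneg_right hφm.le hr.le
    _ = nmM m := one_mul _

end Bounded

section OpNorm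

variable {M N : Type*} [AddCommGroup M] [AddCommGroup N] {nmM : M → ℝ} {nmN : N → ℝ}

theorem opNorm_le (hnmM : ∀ m, 0 ≤ nmM m) {f : M → N} {K : ℝ} (hK : 0 ≤ K)
    (h : ∀ m, nmN (f m) ≤ K * nmM m) : opNorm nmM nmN f ≤ K :=
  Real.sSup_le (by rintro _ ⟨m, -, rfl⟩; exact div_le_of_le_mul₀ (hnmM m) hK (h m)) hK

theorem opNorm_nonneg (hnmM : ∀ m, 0 ≤ nmM m) (hnmN : ∀ x, 0 ≤ nmN x) (f : M → N) :
    0 ≤ opNorm nmM nmN f :=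
  Real.sSup_nonneg (by rintro _ ⟨m, -, rfl⟩; exact div_nonneg (hnmN _) (hnmM m))

theorem div_le_opNorm (hnmM : ∀ m, 0 ≤ nmM m) {f : M → N} (hf : NormBounded nmM nmN f)
    {m : M} (hm : m ≠ 0) : nmN (f m) / nmM m ≤ opNorm nmM nmN f := by
  obtain ⟨C, hC, hfC⟩ := hf
  refine le_csSup ⟨C, ?_⟩ ⟨m, hm, rfl⟩
  rintro _ ⟨m', -, rfl⟩
  exact div_le_of_le_mul₀ (hnmM m') hC (hfC m')

end OpNorm

section cA

variable {A : Type u} [Ring A] {v : A → ℝ} {hv : IsRingNorm v} {I : Type v}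

theorem tendsto_cofinite_cA (f : cA v hv I) :
    Tendsto (fun i => v ((f : I → A) i)) cofinite (𝓝 0) := by
  refine tendsto_order.2 ⟨fun a ha => .of_forall fun i => ha.trans_le (hv.nonneg _),
    fun ε hε => ?_⟩
  exact (f.2 (ε / 2) (half_pos hε)).subset fun i hi => (half_lt_self hε).trans_le (not_lt.mp hi)

theorem le_cNorm (f : cA v hv I) (i : I) : v ((f : I → A) i) ≤ cNorm v f :=
  le_ciSup (tendsto_cofinite_cA f).bddAbove_range_of_cofinite i

theorem cNorm_le (f : cA v hv I) {C : ℝ} (hC : 0 ≤ C) (h : ∀ i, v ((f : I → A) i) ≤ C) :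
    cNorm v f ≤ C :=
  Real.iSup_le h hC

theorem cNorm_nonneg (f : cA v hv I) : 0 ≤ cNorm v f :=
  Real.iSup_nonneg fun _ => hv.nonneg _

theorem cNorm_stdDelta (i : I) : cNorm v (stdDelta v hv i) = 1 := by
  refine le_antisymm (cNorm_le _ zero_le_one fun k => ?_) ?_
  · change v (if k = i then 1 else 0) ≤ 1
    split_ifs
    exacts [hv.map_one.le, hv.map_zero.trans_le zero_le_one]
  · simpa [stdDelta, hv.map_one] using le_cNorm (stdDelta v hv i) i

theorem projCA_apply (T : Finset I) (f : cA v hv I) (i : I) :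
    ((projCA v hv T f : cA v hv I) : I → A) i = if i ∈ T then (f : I → A) i else 0 := rfl

theorem projCA_eq_sum (T : Finset I) (f : cA v hv I) :
    projCA v hv T f = ∑ i ∈ T, (f : I → A) i • stdDelta v hv i := by
  ext k
  simp [projCA_apply, stdDelta, Finset.sum_apply]

theorem tendsto_cNorm_sub_projCA (f : cA v hv I) :
    Tendsto (fun T => cNorm v (f - projCA v hv T f)) atTop (𝓝 0) := by
  refine tendsto_order.2 ⟨fun a ha => .of_forall fun T => ha.trans_le (cNorm_nonneg _),
    fun ε hε => ?_⟩
  obtain ⟨S, hS⟩ : ∃ S : Finset I, ∀ i, ε / 2 < v ((f : I → A) i) → i ∈ S :=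
    ⟨(f.2 _ (half_pos hε)).toFinset, fun i hi => by simpa using hi⟩
  filter_upwards [eventually_ge_atTop S] with T hT
  refine (cNorm_le _ (half_pos hε).le fun i => ?_).trans_lt (half_lt_self hε)
  by_cases hi : i ∈ T
  · simp [projCA_apply, hi, hv.map_zero, (half_pos hε).le]
  · simpa [projCA_apply, hi] using not_lt.mp (mt (fun h => hT (hS i h)) hi)

theorem exists_linearMap_cA_stdDelta {N : Type*} [NormedAddCommGroup N] [IsUltrametricDist N]
    [CompleteSpace N] [Module A N] (hsmul : ∀ (c : A) (x : N), ‖c • x‖ ≤ v c * ‖x‖)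
    (g : I → N) {C : ℝ} (hC : 0 ≤ C) (hg : ∀ i, ‖g i‖ ≤ C) :
    ∃ ψ : cA v hv I →ₗ[A] N, (∀ f, ‖ψ f‖ ≤ C * cNorm v f) ∧
      ∀ i, ψ (stdDelta v hv i) = g i := by
  have : ContinuousConstSMul A N := ⟨fun c =>
    AddMonoidHomClass.continuous_of_bound (DistribSMul.toAddMonoidHom N c) (v c) (hsmul c)⟩
  have hterm : ∀ (f : cA v hv I) i, ‖(f : I → A) i • g i‖ ≤ C * v ((f : I → A) i) := fun f i =>
    (hsmul _ _).trans (by rw [mul_comm C]; exact mul_le_mul_of_nonneg_left (hg i) (hv.nonneg _))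
  have hsum : ∀ f : cA v hv I, Summable fun i => (f : I → A) i • g i := fun f =>
    NonarchimedeanAddGroup.summable_of_tendsto_cofinite_zero <| squeeze_zero_norm (hterm f)
      (by simpa using (tendsto_cofinite_cA f).const_mul C)
  refine ⟨{ toFun := fun f => ∑' i, (f : I → A) i • g i
            map_add' := fun f f' => by
              simp only [Submodule.coe_add, Pi.add_apply, add_smul]
              exact (hsum f).tsum_add (hsum f')
            map_smul' := fun c f => by
              simp only [Submodule.coe_smul, Pi.smul_apply, smul_eq_mul, mul_smul,
                RingHom.id_apply]
              exact (hsum f).tsum_const_smul c }, fun f => ?_, fun i => ?_⟩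
  · exact IsUltrametricDist.norm_tsum_le_of_forall_le_of_nonneg (mul_nonneg hC (cNorm_nonneg f))
      fun i => (hterm f i).trans (mul_le_mul_of_nonneg_left (le_cNorm f i) hC)
  · change ∑' k, (if k = i then (1 : A) else 0) • g k = g i
    simp only [ite_smul, one_smul, zero_smul]
    exact tsum_ite_eq i g

end cA

section ONBasis

variable {A : Type u} [Ring A] {v : A → ℝ} {hv : IsRingNorm v} {I : Type v}
  {M : Type v} [AddCommGroup M] [Module A M] {nmM : M → ℝ}
  {N : Type*} [AddCommGroup N] [Module A N] {nmN : N → ℝ}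
  {TM : M ≃ₗ[A] cA v hv I}

theorem projON_eq_sum (T : Finset I) (m : M) :
    projON v hv TM T m = ∑ i ∈ T, ((TM m : cA v hv I) : I → A) i • TM.symm (stdDelta v hv i) := by
  simp [projON, projCA_eq_sum]

theorem tendsto_nm_sub_projON (hTM : ∀ m, nmM m = cNorm v (TM m)) (m : M) :
    Tendsto (fun T => nmM (m - projON v hv TM T m)) atTop (𝓝 0) := by
  simpa [hTM, projON] using tendsto_cNorm_sub_projCA (TM m)

theorem nm_symm_stdDelta (hTM : ∀ m, nmM m = cNorm v (TM m)) (i : I) :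
    nmM (TM.symm (stdDelta v hv i)) = 1 := by
  rw [hTM, TM.apply_symm_apply, cNorm_stdDelta]

theorem NormBounded.le_of_forall_basis_le (hnmN : IsModuleNorm v nmN)
    (hTM : ∀ m, nmM m = cNorm v (TM m)) {φ : M →ₗ[A] N} (hφ : NormBounded nmM nmN φ)
    {K : ℝ} (hK : 0 ≤ K) (hbasis : ∀ i, nmN (φ (TM.symm (stdDelta v hv i))) ≤ K) (m : M) :
    nmN (φ m) ≤ K * nmM m := by
  obtain ⟨C, -, hφC⟩ := hφ
  have hKm : 0 ≤ K * nmM m := mul_nonneg hK (hTM m ▸ cNorm_nonneg _)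
  have hpartial : ∀ T, nmN (φ (projON v hv TM T m)) ≤ K * nmM m := fun T => by
    rw [projON_eq_sum, map_sum]
    refine hnmN.sum_le T hKm fun i _ => ?_
    rw [map_smul, mul_comm K, hTM]
    exact (hnmN.smul_le _ _).trans
      (mul_le_mul (le_cNorm _ i) (hbasis i) (hnmN.nonneg _) (cNorm_nonneg _))
  have htail : Tendsto (fun T => nmN (φ (m - projON v hv TM T m))) atTop (𝓝 0) :=
    squeeze_zero (fun _ => hnmN.nonneg _) (fun _ => hφC _)
      (by simpa using (tendsto_nm_sub_projON hTM m).const_mul C)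
  have hlim := htail.max (tendsto_const_nhds (x := K * nmM m))
  rw [max_eq_right hKm] at hlim
  refine ge_of_tendsto' hlim fun T => ?_
  calc nmN (φ m) = nmN (φ (m - projON v hv TM T m) + φ (projON v hv TM T m)) := by
        rw [← map_add, sub_add_cancel]
    _ ≤ _ := (hnmN.add_le _ _).trans (max_le_max le_rfl (hpartial T))

theorem NormBounded.ext_basis (hnmM : IsModuleNorm v nmM) (hnmN : IsModuleNorm v nmN)
    (hTM : ∀ m, nmM m = cNorm v (TM m)) {φ ψ : M →ₗ[A] N} (hφ : NormBounded nmM nmN φ)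
    (hψ : NormBounded nmM nmN ψ)
    (h : ∀ i, φ (TM.symm (stdDelta v hv i)) = ψ (TM.symm (stdDelta v hv i))) : φ = ψ := by
  have hsub : NormBounded nmM nmN ⇑(φ - ψ) := hφ.sub hnmM hnmN hψ
  ext m
  have := hsub.le_of_forall_basis_le hnmN hTM le_rfl (fun i => by simp [h i, hnmN.map_zero]) m
  rw [zero_mul] at this
  exact sub_eq_zero.mp ((hnmN.eq_zero_iff _).mp (le_antisymm this (hnmN.nonneg _)))

theorem exists_linearMap_basis_eq (hnmN : IsModuleNorm v nmN) (hcompN : NormComplete nmN)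
    (hTM : ∀ m, nmM m = cNorm v (TM m)) (g : I → N) {C : ℝ} (hC : 0 ≤ C)
    (hg : ∀ i, nmN (g i) ≤ C) :
    ∃ φ : M →ₗ[A] N, (∀ m, nmN (φ m) ≤ C * nmM m) ∧
      ∀ i, φ (TM.symm (stdDelta v hv i)) = g i := by
  let _ := hnmN.toNormedAddCommGroup
  have _ : IsUltrametricDist N :=
    IsUltrametricDist.isUltrametricDist_of_forall_norm_add_le_max_norm hnmN.add_le
  have _ : CompleteSpace N := Metric.complete_of_cauchySeq_tendsto fun s hs =>
    let ⟨x, hx⟩ := hcompN s fun ε hε =>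
      let ⟨n, hn⟩ := Metric.cauchySeq_iff.mp hs ε hε
      ⟨n, fun i j hi hj => (dist_eq_norm _ _).symm.trans_lt (hn i hi j hj)⟩
    ⟨x, Metric.tendsto_atTop.mpr fun ε hε =>
      let ⟨n, hn⟩ := hx ε hε
      ⟨n, fun i hi => (dist_eq_norm _ _).trans_lt (hn i hi)⟩⟩
  obtain ⟨ψ, hψ, hψδ⟩ := exists_linearMap_cA_stdDelta hnmN.smul_le g hC hg
  exact ⟨ψ ∘ₗ TM.toLinearMap, fun m => hTM m ▸ hψ (TM m),
    fun i => by simpa using hψδ i⟩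

end ONBasis

section Matrix

variable {A : Type u} [Ring A] {v : A → ℝ} {hv : IsRingNorm v} {I J : Type v}
  {M N : Type v} [AddCommGroup M] [Module A M] [AddCommGroup N] [Module A N]
  {nmM : M → ℝ} {nmN : N → ℝ} {TM : M ≃ₗ[A] cA v hv I} {TN : N ≃ₗ[A] cA v hv J}

theorem matrixCoef_eq_iff {φ : M →ₗ[A] N} {i : I} {a : J → A} (ha : a ∈ cA v hv J) :
    (∀ j, matrixCoef v hv TM TN φ i j = a j) ↔
      φ (TM.symm (stdDelta v hv i)) = TN.symm ⟨a, ha⟩ := by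
  rw [LinearEquiv.eq_symm_apply, Subtype.ext_iff, funext_iff]
  rfl

theorem v_matrixCoef_le (hTN : ∀ x, nmN x = cNorm v (TN x)) (φ : M →ₗ[A] N) (i : I) (j : J) :
    v (matrixCoef v hv TM TN φ i j) ≤ nmN (φ (TM.symm (stdDelta v hv i))) :=
  hTN _ ▸ le_cNorm _ j

theorem opNorm_eq_iSup_matrixCoef (hnmM : IsModuleNorm v nmM) (hnmN : IsModuleNorm v nmN)
    (hTM : ∀ m, nmM m = cNorm v (TM m)) (hTN : ∀ x, nmN x = cNorm v (TN x))
    {φ : M →ₗ[A] N} (hφ : NormBounded nmM nmN φ)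
    (hbdd : BddAbove (Set.range fun p : I × J => v (matrixCoef v hv TM TN φ p.1 p.2))) :
    opNorm nmM nmN φ = ⨆ p : I × J, v (matrixCoef v hv TM TN φ p.1 p.2) := by
  have hK : 0 ≤ ⨆ p : I × J, v (matrixCoef v hv TM TN φ p.1 p.2) :=
    Real.iSup_nonneg fun _ => hv.nonneg _
  have hbasis : ∀ i, nmN (φ (TM.symm (stdDelta v hv i))) ≤
      ⨆ p : I × J, v (matrixCoef v hv TM TN φ p.1 p.2) := fun i =>
    hTN _ ▸ cNorm_le _ hK fun j => le_ciSup hbdd (i, j)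
  refine le_antisymm (opNorm_le hnmM.nonneg hK (hφ.le_of_forall_basis_le hnmN hTM hK hbasis))
    (Real.iSup_le (fun p => ?_) (opNorm_nonneg hnmM.nonneg hnmN.nonneg φ))
  have he := nm_symm_stdDelta hTM p.1
  have he0 : TM.symm (stdDelta v hv p.1) ≠ 0 := fun h0 => by
    rw [h0, hnmM.map_zero] at he
    exact zero_ne_one he
  calc v (matrixCoef v hv TM TN φ p.1 p.2) ≤ nmN (φ (TM.symm (stdDelta v hv p.1))) :=
        v_matrixCoef_le hTN φ p.1 p.2
    _ = nmN (φ (TM.symm (stdDelta v hv p.1))) / nmM (TM.symm (stdDelta v hv p.1)) := by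
        rw [he, div_one]
    _ ≤ opNorm nmM nmN φ := div_le_opNorm hnmM.nonneg hφ he0

end Matrix

theorem matrix_correspondence_general
    {A : Type u} [Ring A] (v : A → ℝ) (hA : IsBanachTate v)
    {M N : Type u} [AddCommGroup M] [Module A M] [AddCommGroup N] [Module A N]
    (nmM : M → ℝ) (hnmM : IsModuleNorm v nmM)
    (nmN : N → ℝ) (hnmN : IsModuleNorm v nmN) (hcompN : NormComplete nmN)
    {I J : Type u}
    (TM : M ≃ₗ[A] cA v hA.isRingNorm I) (hTM : ∀ m : M, nmM m = cNorm v (TM m))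
    (TN : N ≃ₗ[A] cA v hA.isRingNorm J) (hTN : ∀ x : N, nmN x = cNorm v (TN x)) :
    (∀ φ : M →ₗ[A] N, NormContinuous nmM nmN φ →
      (∀ i : I, ∀ ε : ℝ, 0 < ε →
        {j : J | ε < v (matrixCoef v hA.isRingNorm TM TN φ i j)}.Finite) ∧
      (∃ C : ℝ, ∀ (i : I) (j : J), v (matrixCoef v hA.isRingNorm TM TN φ i j) ≤ C) ∧
      opNorm nmM nmN φ =
        ⨆ p : I × J, v (matrixCoef v hA.isRingNorm TM TN φ p.1 p.2)) ∧
    (∀ a : I → J → A,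
      (∀ i : I, ∀ ε : ℝ, 0 < ε → {j : J | ε < v (a i j)}.Finite) →
      (∃ C : ℝ, ∀ (i : I) (j : J), v (a i j) ≤ C) →
      (∃! φ : M →ₗ[A] N, NormContinuous nmM nmN φ ∧
        ∀ (i : I) (j : J), matrixCoef v hA.isRingNorm TM TN φ i j = a i j) ∧
      (∀ φ : M →ₗ[A] N, NormContinuous nmM nmN φ →
        (∀ (i : I) (j : J), matrixCoef v hA.isRingNorm TM TN φ i j = a i j) →
        opNorm nmM nmN φ = ⨆ p : I × J, v (a p.1 p.2))) := by
  have hbounded := fun φ => normBounded_of_normContinuous (φ := φ) hA hnmM hnmN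
  refine ⟨fun φ hφ => ?_, fun a hdecay ⟨C, hC⟩ => ?_⟩
  · obtain ⟨C, -, hφC⟩ := hbounded φ hφ
    have hcoef i j := (v_matrixCoef_le hTN φ i j).trans
      (by simpa [nm_symm_stdDelta hTM] using hφC (TM.symm (stdDelta v _ i)))
    exact ⟨fun i => (TN (φ _)).2, ⟨C, hcoef⟩, opNorm_eq_iSup_matrixCoef hnmM hnmN hTM hTN
      (hbounded φ hφ) ⟨C, by rintro _ ⟨p, rfl⟩; exact hcoef p.1 p.2⟩⟩
  have hbdd : BddAbove (Set.range fun p : I × J => v (a p.1 p.2)) := ⟨C, by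
    rintro _ ⟨p, rfl⟩; exact hC p.1 p.2⟩
  have hK : 0 ≤ ⨆ p : I × J, v (a p.1 p.2) := Real.iSup_nonneg fun _ => hA.isRingNorm.nonneg _
  have hrow (ψ : M →ₗ[A] N) : (∀ i j, matrixCoef v hA.isRingNorm TM TN ψ i j = a i j) ↔
      ∀ i, ψ (TM.symm (stdDelta v _ i)) = TN.symm ⟨a i, hdecay i⟩ :=
    forall_congr' fun i => matrixCoef_eq_iff (hdecay i)
  obtain ⟨φ, hφK, hφa⟩ := exists_linearMap_basis_eq hnmN hcompN hTM
    (fun i => TN.symm ⟨a i, hdecay i⟩) hK fun i => by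
      rw [hTN, TN.apply_symm_apply]
      exact cNorm_le _ hK fun j => le_ciSup hbdd (i, j)
  have hφ : NormBounded nmM nmN φ := ⟨_, hK, hφK⟩
  refine ⟨⟨φ, ⟨hφ.normContinuous, (hrow φ).2 hφa⟩, fun ψ ⟨hψ, hψa⟩ =>
    NormBounded.ext_basis hnmM hnmN hTM (hbounded ψ hψ) hφ fun i => ?_⟩, fun ψ hψ hψa => ?_⟩
  · rw [(hrow ψ).1 hψa i, hφa i]
  · have hψa' : matrixCoef v hA.isRingNorm TM TN ψ = a := funext₂ hψa
    have := opNorm_eq_iSup_matrixCoef hnmM hnmN hTM hTN (hbounded ψ hψ) (hψa' ▸ hbdd)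
    rwa [hψa'] at this

/-- Matrices of continuous maps between ONable Banach modules over a
Banach–Tate ring: (i) the matrix of a continuous linear map has columns tending to
zero, is bounded, and the operator norm is the sup of the matrix norms; (ii)
conversely any such family of coefficients is the matrix of a unique continuous
linear map, whose norm is the sup of the coefficient norms. -/
theorem matrix_correspondence
    {A : Type u} [Ring A] (v : A → ℝ) (hA : IsBanachTate v)
    {M N : Type u} [AddCommGroup M] [Module A M] [AddCommGroup N] [Module A N]
    (nmM : M → ℝ) (hnmM : IsModuleNorm v nmM) (hcompM : NormComplete nmM)
    (nmN : N → ℝ) (hnmN : IsModuleNorm v nmN) (hcompN : NormComplete nmN)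
    {I J : Type u}
    (TM : M ≃ₗ[A] cA v hA.isRingNorm I) (hTM : ∀ m : M, nmM m = cNorm v (TM m))
    (TN : N ≃ₗ[A] cA v hA.isRingNorm J) (hTN : ∀ x : N, nmN x = cNorm v (TN x)) :
    (∀ φ : M →ₗ[A] N, NormContinuous nmM nmN φ →
      (∀ i : I, ∀ ε : ℝ, 0 < ε →
        {j : J | ε < v (matrixCoef v hA.isRingNorm TM TN φ i j)}.Finite) ∧
      (∃ C : ℝ, ∀ (i : I) (j : J), v (matrixCoef v hA.isRingNorm TM TN φ i j) ≤ C) ∧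
      opNorm nmM nmN φ =
        ⨆ p : I × J, v (matrixCoef v hA.isRingNorm TM TN φ p.1 p.2)) ∧
    (∀ a : I → J → A,
      (∀ i : I, ∀ ε : ℝ, 0 < ε → {j : J | ε < v (a i j)}.Finite) →
      (∃ C : ℝ, ∀ (i : I) (j : J), v (a i j) ≤ C) →
      (∃! φ : M →ₗ[A] N, NormContinuous nmM nmN φ ∧
        ∀ (i : I) (j : J), matrixCoef v hA.isRingNorm TM TN φ i j = a i j) ∧
      (∀ φ : M →ₗ[A] N, NormContinuous nmM nmN φ →
        (∀ (i : I) (j : J), matrixCoef v hA.isRingNorm TM TN φ i j = a i j) →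
        opNorm nmM nmN φ = ⨆ p : I × J, v (a p.1 p.2))) :=
  matrix_correspondence_general v hA nmM hnmM nmN hnmN hcompN TM hTM TN hTN
end

section
/- Let A and A′ be commutative noetherian rings, T a ring, N a finitely generated A-module, f:A→A′ a ring homomorphism, and ψ_A:T→End_A(N) a ring homomorphism. Let ψ_{A′}:T→End_{A′}(N⊗_AA′) be the composition of ψ_A with the natural base-change map End_A(N)→End_{A′}(N⊗_AA′) induced by f. Let T_A⊆End_A(N) be the A-subalgebra generated by the image of ψ_A, and T_{A′}⊆End_{A′}(N⊗_AA′) the A′-subalgebra generated by the image of ψ_{A′}. Then the natural A′-linear ring map T_A⊗_AA′→T_{A′} is surjective and its kernel is a nilpotent ideal; if moreover f is flat, this map is an isomorphism. -/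
/-!
Choose generators `v₁, …, v_k` of `N`. For any `A`-algebra `D`, an element of `D ⊗ T_A` acts as
zero on `D ⊗ N` if and only if it is killed by the base change of the evaluation map `T_A → N^k`,
`b ↦ (b vᵢ)ᵢ`; since this map is injective, flatness of `D` makes the comparison map injective.

For nilpotence, the kernel over `A'` is finitely generated, and its generators together with the
vanishing of their images already live over a finitely generated subalgebra `C ⊆ A'`. Write
`C = B ⧸ 𝔞` with `B` a polynomial ring over `A`, which is flat and noetherian. A lift to `B ⊗ T_A`
of a kernel element maps `B ⊗ N` into `𝔞 (B ⊗ N)`, so a product of `n` such lifts maps it into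
`𝔞ⁿ (B ⊗ N)`. Artin–Rees for the injective map `B ⊗ T_A → (B ⊗ N)^k` puts such a product in
`𝔞 (B ⊗ T_A)` once `n` is large, so its image in `C ⊗ T_A` vanishes.
-/

open scoped TensorProduct Pointwise

universe u

theorem AlgHom.rTensor_eq_zero_iff_mem_ker_smul_top {R S S' M : Type*} [CommRing R] [CommRing S]
    [CommRing S'] [Algebra R S] [Algebra R S'] [AddCommGroup M] [Module R M]
    {h : S →ₐ[R] S'} (hh : Function.Surjective h) {w : S ⊗[R] M} :
    h.toLinearMap.rTensor M w = 0 ↔ w ∈ RingHom.ker h • (⊤ : Submodule S (S ⊗[R] M)) := by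
  have rTensor_smul (r : S) (z : S ⊗[R] M) :
      h.toLinearMap.rTensor M (r • z) = h r • h.toLinearMap.rTensor M z := by
    induction z using TensorProduct.induction_on with
    | zero => simp
    | tmul q m => simp [TensorProduct.smul_tmul']
    | add y z hy hz => simp only [smul_add, map_add, hy, hz]
  constructor
  · intro hw
    have hexact := rTensor_exact M (h.toLinearMap.restrictScalars R).exact_subtype_ker_map hh
    obtain ⟨z, rfl⟩ := (hexact w).mp hw
    clear hw
    induction z using TensorProduct.induction_on with
    | zero => rw [map_zero]; exact zero_mem _
    | tmul q m =>
      rw [LinearMap.rTensor_tmul, Submodule.subtype_apply, ← mul_one (q : S), ← smul_eq_mul,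
        ← TensorProduct.smul_tmul']
      exact Submodule.smul_mem_smul q.2 Submodule.mem_top
    | add y z hy hz => rw [map_add]; exact add_mem hy hz
  · intro hw
    refine Submodule.smul_induction_on hw (fun r hr z _ => ?_) (fun y z hy hz => ?_)
    · rw [rTensor_smul, hr, zero_smul]
    · rw [map_add, hy, hz, add_zero]

theorem Submodule.mem_smul_top_pi {R M ι : Type*} [CommSemiring R] [AddCommMonoid M] [Module R M]
    [Finite ι] {I : Ideal R} {f : ι → M} (hf : ∀ i, f i ∈ I • (⊤ : Submodule R M)) :
    f ∈ I • (⊤ : Submodule R (ι → M)) := by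
  classical
  have := Fintype.ofFinite ι
  rw [← Finset.univ_sum_single f]
  refine Submodule.sum_mem _ fun i _ => ?_
  have hmap := Submodule.mem_map_of_mem (f := LinearMap.single R (fun _ => M) i) (hf i)
  rw [Submodule.map_smul''] at hmap
  exact Submodule.smul_mono le_rfl le_top hmap

theorem Ideal.exists_comap_pow_smul_top_le_smul_top {R M P : Type*} [CommRing R]
    [IsNoetherianRing R] [AddCommGroup M] [Module R M] [Module.Finite R M]
    [AddCommGroup P] [Module R P] (I : Ideal R) {j : P →ₗ[R] M} (hj : Function.Injective j) :
    ∃ n, (I ^ n • ⊤ : Submodule R M).comap j ≤ I • ⊤ := by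
  obtain ⟨e, he⟩ := I.exists_pow_inf_eq_pow_smul (LinearMap.range j)
  refine ⟨e + 1, fun p hp => ?_⟩
  have hp' : j p ∈ I • (⊤ : Submodule R P).map j := by
    have hmem : j p ∈ I ^ (e + 1) • ⊤ ⊓ LinearMap.range j := ⟨hp, p, rfl⟩
    rw [he (e + 1) le_self_add, Nat.add_sub_cancel_left, pow_one] at hmem
    rw [Submodule.map_top]
    exact Submodule.smul_mono le_rfl inf_le_right hmem
  rw [← Submodule.map_smul''] at hp'
  obtain ⟨q, hq, hqp⟩ := hp'
  exact hj hqp ▸ hq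

theorem Module.End.range_mul_le_smul_top {R M : Type*} [CommSemiring R] [AddCommMonoid M]
    [Module R M] {I J : Ideal R} {f g : Module.End R M} (hf : LinearMap.range f ≤ I • ⊤)
    (hg : LinearMap.range g ≤ J • ⊤) : LinearMap.range (f * g) ≤ (J * I) • ⊤ := by
  rw [Module.End.mul_eq_comp, LinearMap.range_comp, Submodule.mul_smul]
  calc (LinearMap.range g).map f ≤ (J • ⊤ : Submodule R M).map f := Submodule.map_mono hg
    _ = J • LinearMap.range f := by rw [Submodule.map_smul'', Submodule.map_top]
    _ ≤ J • I • ⊤ := smul_mono_right _ hf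

theorem Module.End.setOf_range_le_smul_top_pow_subset {R M : Type*} [CommSemiring R]
    [AddCommMonoid M] [Module R M] (I : Ideal R) (n : ℕ) :
    {f : Module.End R M | LinearMap.range f ≤ I • ⊤} ^ n ⊆
      {f | LinearMap.range f ≤ I ^ n • ⊤} := by
  induction n with
  | zero => simp
  | succ n ih =>
    rintro _ ⟨f, hf, g, hg, rfl⟩
    rw [pow_succ']
    exact Module.End.range_mul_le_smul_top (ih hf) hg

theorem Submodule.coe_span_pow_subset_zero {R B : Type*} [CommSemiring R] [Semiring B] [Algebra R B]
    {s : Set B} {n : ℕ} (hs : s ^ n ⊆ {0}) : (span R s : Set B) ^ n ⊆ {0} := by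
  have hle : span R (s ^ n) ≤ ⊥ := Submodule.span_le.mpr (by simpa using hs)
  refine (Submodule.pow_subset_pow _).trans ?_
  rw [Submodule.span_pow]
  exact fun x hx => (Submodule.mem_bot R).mp (hle hx)

theorem LinearMap.exists_fg_forall_lift_of_baseChange_eq_zero {R S M P : Type*} [CommRing R]
    [CommRing S] [Algebra R S] [AddCommGroup M] [Module R M] [AddCommGroup P] [Module R P]
    (f : M →ₗ[R] P) (t : Finset (S ⊗[R] M)) (ht : ∀ x ∈ t, f.baseChange S x = 0) :
    ∃ C : Subalgebra R S, C.FG ∧ ∀ x ∈ t,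
      ∃ u : C ⊗[R] M, f.baseChange C u = 0 ∧ C.val.toLinearMap.rTensor M u = x := by
  classical
  have enlarge {C C' : Subalgebra R S} (hCC' : C ≤ C') {x : S ⊗[R] M}
      (hx : ∃ u : C ⊗[R] M, f.baseChange C u = 0 ∧ C.val.toLinearMap.rTensor M u = x) :
      ∃ u : C' ⊗[R] M, f.baseChange C' u = 0 ∧ C'.val.toLinearMap.rTensor M u = x := by
    obtain ⟨u, hu, rfl⟩ := hx
    refine ⟨(Subalgebra.inclusion hCC').toLinearMap.rTensor M u, ?_, ?_⟩
    · rw [← LinearMap.rTensor_baseChange, hu, map_zero]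
    · rw [← LinearMap.comp_apply, ← LinearMap.rTensor_comp]
      rfl
  induction t using Finset.induction_on with
  | empty => exact ⟨⊥, Subalgebra.fg_bot, by simp⟩
  | insert x t _ ih =>
    obtain ⟨C, hC, hCt⟩ := ih fun y hy => ht y (Finset.mem_insert_of_mem hy)
    obtain ⟨Cx, hCx, u, hu, hux⟩ :=
      Submodule.exists_fg_of_baseChange_eq_zero f (ht x (Finset.mem_insert_self x t))
    refine ⟨Cx ⊔ C, hCx.sup hC, fun y hy => ?_⟩
    rcases Finset.mem_insert.mp hy with rfl | hy
    · exact enlarge le_sup_left ⟨u, hu, hux⟩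
    · exact enlarge le_sup_right (hCt y hy)

namespace Subalgebra

variable {A : Type*} [CommRing A] {N : Type*} [AddCommGroup N] [Module A N]
  (S : Subalgebra A (Module.End A N)) (D : Type*) [CommRing D] [Algebra A D]

noncomputable def endBaseChange : D ⊗[A] S →ₐ[D] Module.End D (D ⊗[A] N) :=
  Algebra.TensorProduct.lift (Algebra.ofId D _) ((Module.End.baseChangeHom A D N).comp S.val)
    fun r _ => Algebra.commutes r _

theorem endBaseChange_tmul (d : D) (b : S) :
    S.endBaseChange D (d ⊗ₜ b) = d • (b : Module.End A N).baseChange D := by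
  refine (Algebra.TensorProduct.lift_tmul _ _ _ d b).trans ?_
  rw [Algebra.ofId_apply, ← Algebra.smul_def]
  rfl

theorem rTensor_endBaseChange {D' : Type*} [CommRing D'] [Algebra A D'] (g : D →ₐ[A] D')
    (x : D ⊗[A] S) (m : D ⊗[A] N) :
    g.toLinearMap.rTensor N (S.endBaseChange D x m) =
      S.endBaseChange D' (Algebra.TensorProduct.map g (AlgHom.id A S) x)
        (g.toLinearMap.rTensor N m) := by
  induction x using TensorProduct.induction_on with
  | zero => simp
  | tmul d b =>
    induction m using TensorProduct.induction_on with
    | zero => simp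
    | tmul e n => simp [endBaseChange_tmul, TensorProduct.smul_tmul']
    | add m m' hm hm' => simp only [map_add, hm, hm']
  | add x x' hx hx' => simp only [map_add, LinearMap.add_apply, hx, hx']

variable {ι : Type*} (v : ι → N)

noncomputable def evalOn : S →ₗ[A] (ι → N) :=
  LinearMap.pi fun i => LinearMap.applyₗ (v i) ∘ₗ S.val.toLinearMap

variable {S v} in
theorem evalOn_injective (hv : Submodule.span A (Set.range v) = ⊤) :
    Function.Injective (S.evalOn v) := fun _ _ hbc =>
  Subtype.ext <| LinearMap.ext_on_range hv fun i => congrFun hbc i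

variable [Fintype ι] [DecidableEq ι]

noncomputable def evalBaseChange : D ⊗[A] S →ₗ[D] (ι → D ⊗[A] N) :=
  (TensorProduct.piRight A D D fun _ => N).toLinearMap ∘ₗ (S.evalOn v).baseChange D

theorem evalBaseChange_apply (x : D ⊗[A] S) (i : ι) :
    S.evalBaseChange D v x i = S.endBaseChange D x (1 ⊗ₜ v i) := by
  induction x using TensorProduct.induction_on with
  | zero => simp
  | tmul d b => simp [evalBaseChange, evalOn, endBaseChange_tmul, TensorProduct.smul_tmul']
  | add x x' hx hx' => simp only [map_add, Pi.add_apply, LinearMap.add_apply, hx, hx']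

variable {S v}

theorem evalBaseChange_injective [Module.Flat A D] (hv : Submodule.span A (Set.range v) = ⊤) :
    Function.Injective (S.evalBaseChange D v) :=
  (TensorProduct.piRight A D D fun _ => N).injective.comp
    (Module.Flat.lTensor_preserves_injective_linearMap _ (evalOn_injective hv))

theorem endBaseChange_eq_zero_iff (hv : Submodule.span A (Set.range v) = ⊤) {x : D ⊗[A] S} :
    S.endBaseChange D x = 0 ↔ S.evalBaseChange D v x = 0 := by
  have hspan : Submodule.span D (Set.range (TensorProduct.mk A D N 1 ∘ v)) = ⊤ := by
    rw [Set.range_comp, ← Submodule.baseChange_span, hv, Submodule.baseChange_top]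
  refine ⟨fun hx => funext fun i => by rw [evalBaseChange_apply, hx]; rfl, fun hx => ?_⟩
  exact LinearMap.ext_on_range hspan fun i => by
    rw [Function.comp_apply, TensorProduct.mk_apply, ← evalBaseChange_apply, hx]; rfl

theorem endBaseChange_injective [Module.Finite A N] [Module.Flat A D] :
    Function.Injective (S.endBaseChange D) := by
  obtain ⟨k, v, hv⟩ := Module.Finite.exists_fin (R := A) (M := N)
  refine (injective_iff_map_eq_zero _).mpr fun x hx => ?_
  exact evalBaseChange_injective D hv <| by
    rw [map_zero]; exact (endBaseChange_eq_zero_iff D hv).mp hx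

theorem range_endBaseChange_adjoin (s : Set (Module.End A N)) :
    ((Algebra.adjoin A s).endBaseChange D).range =
      Algebra.adjoin D (LinearMap.baseChange D '' s) := by
  refine le_antisymm ?_ (Algebra.adjoin_le ?_)
  · have hmap : (Algebra.adjoin A s).map (Module.End.baseChangeHom A D N) ≤
        (Algebra.adjoin D (LinearMap.baseChange D '' s)).restrictScalars A := by
      rw [AlgHom.map_adjoin]
      exact Algebra.adjoin_le Algebra.subset_adjoin
    intro y hy
    obtain ⟨x, rfl⟩ := (AlgHom.mem_range _).mp hy
    clear hy
    induction x using TensorProduct.induction_on with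
    | zero => rw [map_zero]; exact zero_mem _
    | tmul d b =>
      rw [endBaseChange_tmul]
      exact Subalgebra.smul_mem (Algebra.adjoin D _) (hmap ⟨b, b.2, rfl⟩) d
    | add x y hx hy => rw [map_add]; exact add_mem hx hy
  · rintro _ ⟨a, ha, rfl⟩
    exact (AlgHom.mem_range _).mpr
      ⟨1 ⊗ₜ ⟨a, Algebra.subset_adjoin ha⟩, by rw [endBaseChange_tmul, one_smul]⟩

theorem exists_pow_ker_endBaseChange_subset_zero_of_surjective [Module.Finite A N]
    {B C : Type*} [CommRing B] [IsNoetherianRing B] [Algebra A B] [Module.Flat A B]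
    [CommRing C] [Algebra A C] {h : B →ₐ[A] C} (hh : Function.Surjective h) :
    ∃ n, (RingHom.ker (S.endBaseChange C) : Set (C ⊗[A] S)) ^ n ⊆ {0} := by
  obtain ⟨k, v, hv⟩ := Module.Finite.exists_fin (R := A) (M := N)
  set a := RingHom.ker h
  set g := Algebra.TensorProduct.map h (AlgHom.id A S)
  set E := {f : Module.End B (B ⊗[A] N) | LinearMap.range f ≤ a • ⊤}
  set J := S.endBaseChange B ⁻¹' E
  have ker_subset : (RingHom.ker (S.endBaseChange C) : Set (C ⊗[A] S)) ⊆ g '' J := by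
    intro y hy
    obtain ⟨x, rfl⟩ :=
      Algebra.TensorProduct.map_surjective h (AlgHom.id A S) hh Function.surjective_id y
    refine ⟨x, ?_, rfl⟩
    rintro _ ⟨m, rfl⟩
    rw [← AlgHom.rTensor_eq_zero_iff_mem_ker_smul_top hh, rTensor_endBaseChange,
      (RingHom.mem_ker).mp hy, LinearMap.zero_apply]
  obtain ⟨n, hn⟩ := a.exists_comap_pow_smul_top_le_smul_top (S.evalBaseChange_injective B hv)
  have image_pow_subset : S.endBaseChange B '' J ^ n ⊆ E ^ n := by
    rw [Set.image_pow]
    exact Set.pow_subset_pow_left (Set.image_preimage_subset _ _)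
  have pow_subset_ker : J ^ n ⊆ RingHom.ker g := fun x hx => by
    have hrange :=
      Module.End.setOf_range_le_smul_top_pow_subset a n (image_pow_subset ⟨x, hx, rfl⟩)
    have hmem : x ∈ a • (⊤ : Submodule B (B ⊗[A] S)) :=
      hn <| Submodule.mem_smul_top_pi fun i => by
        rw [evalBaseChange_apply]
        exact hrange ⟨_, rfl⟩
    exact (AlgHom.rTensor_eq_zero_iff_mem_ker_smul_top hh).mpr hmem
  refine ⟨n, ?_⟩
  calc (RingHom.ker (S.endBaseChange C) : Set (C ⊗[A] S)) ^ n ⊆ (g '' J) ^ n :=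
        Set.pow_subset_pow_left ker_subset
    _ = g '' (J ^ n) := (Set.image_pow g J n).symm
    _ ⊆ {0} := by
        rintro _ ⟨x, hx, rfl⟩
        exact pow_subset_ker hx

theorem exists_pow_ker_endBaseChange_subset_zero [IsNoetherianRing A] [Module.Finite A N]
    (D : Type*) [CommRing D] [IsNoetherianRing D] [Algebra A D] :
    ∃ n, (RingHom.ker (S.endBaseChange D) : Set (D ⊗[A] S)) ^ n ⊆ {0} := by
  obtain ⟨k, v, hv⟩ := Module.Finite.exists_fin (R := A) (M := N)
  have : Module.Finite A S := .of_injective S.val.toLinearMap Subtype.val_injective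
  obtain ⟨t, ht⟩ := IsNoetherian.noetherian (LinearMap.ker (S.endBaseChange D).toLinearMap)
  have ht0 : ∀ x ∈ t, (S.evalOn v).baseChange D x = 0 := fun x hx => by
    have hx' : S.endBaseChange D x = 0 := by
      have := Submodule.subset_span (R := D) hx
      rwa [ht] at this
    exact (TensorProduct.piRight A D D fun _ => N).map_eq_zero_iff.mp
      ((endBaseChange_eq_zero_iff D hv).mp hx')
  obtain ⟨C, hC, hlift⟩ := (S.evalOn v).exists_fg_forall_lift_of_baseChange_eq_zero t ht0
  obtain ⟨m, p, hp⟩ :=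
    Algebra.FiniteType.iff_quotient_mvPolynomial''.mp ((Subalgebra.fg_iff_finiteType C).mp hC)
  obtain ⟨n, hn⟩ := S.exists_pow_ker_endBaseChange_subset_zero_of_surjective hp
  set F := Algebra.TensorProduct.map C.val (AlgHom.id A S)
  have t_subset : (t : Set (D ⊗[A] S)) ⊆ F '' RingHom.ker (S.endBaseChange C) := fun x hx => by
    obtain ⟨u, hu, rfl⟩ := hlift x hx
    exact ⟨u, (endBaseChange_eq_zero_iff C hv).mpr (by simp [evalBaseChange, hu]), rfl⟩
  refine ⟨n, ?_⟩
  have hker : (RingHom.ker (S.endBaseChange D) : Set (D ⊗[A] S)) =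
      Submodule.span D (t : Set (D ⊗[A] S)) := by
    rw [ht]; rfl
  rw [hker]
  refine Submodule.coe_span_pow_subset_zero ?_
  calc (t : Set (D ⊗[A] S)) ^ n ⊆ (F '' RingHom.ker (S.endBaseChange C)) ^ n :=
        Set.pow_subset_pow_left t_subset
    _ = F '' ((RingHom.ker (S.endBaseChange C) : Set (C ⊗[A] S)) ^ n) :=
        (Set.image_pow F _ n).symm
    _ ⊆ {0} := by
        rintro _ ⟨x, hx, rfl⟩
        rw [hn hx, map_zero]
        rfl

end Subalgebra

/-- Let `A, A'` be commutative noetherian rings, `T` a ring, `N` a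
finitely generated `A`-module, `A → A'` a ring homomorphism and `ψ : T → End_A(N)` a
ring homomorphism. Let `T_A ⊆ End_A(N)` be the `A`-subalgebra generated by the image
of `ψ`, and `T_{A'} ⊆ End_{A'}(A' ⊗_A N)` the `A'`-subalgebra generated by the image
of the base-changed map. Then the natural map `T_A ⊗_A A' → T_{A'}` is surjective with
nilpotent kernel, and is an isomorphism if `A → A'` is flat. -/
theorem hecke_algebra_base_change
    {A A' T : Type u} [CommRing A] [CommRing A'] [Ring T]
    [IsNoetherianRing A] [IsNoetherianRing A'] [Algebra A A']
    {N : Type u} [AddCommGroup N] [Module A N] [Module.Finite A N]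
    (ψ : T →+* Module.End A N) :
    letI TA : Subalgebra A (Module.End A N) :=
      Algebra.adjoin A (Set.range fun t : T => ψ t)
    ∀ Φ : (A' ⊗[A] ↥TA) →ₐ[A'] Module.End A' (A' ⊗[A] N),
      Φ = Algebra.TensorProduct.lift
            (Algebra.ofId A' (Module.End A' (A' ⊗[A] N)))
            ((Module.End.baseChangeHom A A' N).comp TA.val)
            (fun x y => Algebra.commutes x _) →
      (Φ.range =
        Algebra.adjoin A' (Set.range fun t : T => LinearMap.baseChange A' (ψ t))) ∧
      (∃ n : ℕ, ∀ g : Fin n → (A' ⊗[A] ↥TA),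
        (∀ i, Φ (g i) = 0) → (List.ofFn g).prod = 0) ∧
      (Module.Flat A A' → Function.Injective Φ) := by
  set TA := Algebra.adjoin A (Set.range fun t : T => ψ t)
  intro Φ hΦ
  obtain rfl : Φ = TA.endBaseChange A' := hΦ
  refine ⟨?_, ?_, fun _ => TA.endBaseChange_injective A'⟩
  · rw [Subalgebra.range_endBaseChange_adjoin, ← Set.range_comp]
    rfl
  · obtain ⟨n, hn⟩ := TA.exists_pow_ker_endBaseChange_subset_zero A'
    exact ⟨n, fun g hg => hn (Set.mem_pow.mpr ⟨fun i => ⟨g i, hg i⟩, rfl⟩)⟩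
end

section
/- Let A be a ring, A₀⊆A a noetherian subring, and ϖ∈A₀ an element that is a unit in A, such that A=⋃_{n≥0}ϖ^{−n}A₀ (i.e. A₀ is a noetherian ring of definition of the complete Tate ring A with pseudo-uniformizer ϖ). Let B⊆A be a subring containing A₀ that is bounded, i.e. ϖ^NB⊆A₀ for some N≥0. Then B is a finitely generated A₀-module; in particular B is noetherian and integral over A₀. Moreover the set A° of power-bounded elements of A, namely A°={a∈A : there exists N≥0 with ϖ^N a^n∈A₀ for all n≥0}, is exactly the integral closure of A₀ in A. -/
universe u

/-- A subring `B` of `A` containing the subring `A₀`, viewed as an `A₀`-submodule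
of `A`. -/
def subringToSubmodule {A : Type u} [CommRing A] (A₀ : Subring A) (B : Subring A)
    (hAB : A₀ ≤ B) : Submodule A₀ A where
  carrier := (B : Set A)
  add_mem' := fun ha hb => B.add_mem ha hb
  zero_mem' := B.zero_mem
  smul_mem' := fun c x hx => B.mul_mem (hAB c.2) hx

/-- A submodule all of whose elements become integral after multiplication by a fixed
power of a unit `ϖ ∈ A₀` is finitely generated when `A₀` is noetherian. -/
theorem bounded_submodule_fg {A : Type u} [CommRing A] (A₀ : Subring A)
    (hnoeth : IsNoetherianRing A₀) (ϖ : A) (hϖ : IsUnit ϖ)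
    (S : Submodule A₀ A) (N : ℕ) (h : ∀ x ∈ S, ϖ ^ N * x ∈ A₀) : S.FG := by
  set u : A := (↑hϖ.unit⁻¹ : A) with hu
  have hϖu : ϖ * u = 1 := hϖ.mul_val_inv
  have hle : S ≤ Submodule.span A₀ {u ^ N} := by
    intro x hx
    rw [Submodule.mem_span_singleton]
    refine ⟨⟨ϖ ^ N * x, h x hx⟩, ?_⟩
    show (ϖ ^ N * x) • u ^ N = x
    rw [smul_eq_mul]
    calc ϖ ^ N * x * u ^ N = (ϖ * u) ^ N * x := by ring
    _ = x := by rw [hϖu, one_pow, one_mul]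
  have hspan : (Submodule.span A₀ {u ^ N}).FG := ⟨{u ^ N}, by simp⟩
  haveI := isNoetherian_of_fg_of_noetherian _ hspan
  have hfg : (Submodule.comap (Submodule.span A₀ {u ^ N}).subtype S).FG :=
    IsNoetherian.noetherian _
  have : Submodule.map (Submodule.span A₀ {u ^ N}).subtype
      (Submodule.comap (Submodule.span A₀ {u ^ N}).subtype S) = S := by
    rw [Submodule.map_comap_subtype, inf_eq_right.mpr hle]
  exact this ▸ hfg.map _

set_option maxHeartbeats 1000000 in
/-- Let `A` be a (complete Tate) ring with noetherian ring of
definition `A₀` and pseudo-uniformizer `ϖ ∈ A₀` (a unit of `A` with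
`A = ⋃ₙ ϖ⁻ⁿ A₀`). If `B ⊆ A` is a bounded subring containing `A₀`, then `B` is a
finitely generated `A₀`-module, hence noetherian and integral over `A₀`; moreover the
power-bounded elements `A°` are exactly the integral closure of `A₀` in `A`. -/
theorem bounded_subring_finite_and_powerBounded_eq_integralClosure
    {A : Type u} [CommRing A] (A₀ : Subring A) (hnoeth : IsNoetherianRing A₀)
    (ϖ : A) (hϖA₀ : ϖ ∈ A₀) (hϖ : IsUnit ϖ)
    (hcov : ∀ a : A, ∃ n : ℕ, ϖ ^ n * a ∈ A₀)
    (B : Subring A) (hAB : A₀ ≤ B)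
    (hbd : ∃ N : ℕ, ∀ b ∈ B, ϖ ^ N * b ∈ A₀) :
    (subringToSubmodule A₀ B hAB).FG ∧
    IsNoetherianRing B ∧
    (∀ b ∈ B, IsIntegral A₀ b) ∧
    (∀ a : A, (∃ N : ℕ, ∀ n : ℕ, ϖ ^ N * a ^ n ∈ A₀) ↔ a ∈ integralClosure A₀ A) := by
  obtain ⟨N, hN⟩ := hbd
  -- helper: increase the exponent
  have hmono : ∀ (m M : ℕ) (x : A), m ≤ M → ϖ ^ m * x ∈ A₀ → ϖ ^ M * x ∈ A₀ := by
    intro m M x hmM hx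
    have : ϖ ^ M * x = ϖ ^ (M - m) * (ϖ ^ m * x) := by
      rw [← mul_assoc, ← pow_add, Nat.sub_add_cancel hmM]
    rw [this]
    exact A₀.mul_mem (A₀.pow_mem hϖA₀ _) hx
  -- (1) FG
  have hfg : (subringToSubmodule A₀ B hAB).FG :=
    bounded_submodule_fg A₀ hnoeth ϖ hϖ _ N (fun x hx => hN x hx)
  refine ⟨hfg, ?_, ?_, ?_⟩
  -- (2) noetherian
  · letI : Algebra A₀ B := (Subring.inclusion hAB).toAlgebra
    haveI : IsScalarTower A₀ B B := IsScalarTower.right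
    -- B is linearly equivalent to the submodule
    let e : B ≃ₗ[A₀] (subringToSubmodule A₀ B hAB) :=
      { toFun := fun b => ⟨(b : A), b.2⟩
        invFun := fun x => ⟨(x : A), x.2⟩
        map_add' := fun x y => rfl
        map_smul' := fun c x => rfl
        left_inv := fun x => rfl
        right_inv := fun x => rfl }
    haveI : IsNoetherian A₀ (subringToSubmodule A₀ B hAB) :=
      isNoetherian_of_fg_of_noetherian _ hfg
    haveI : IsNoetherian A₀ B := isNoetherian_of_linearEquiv e.symm
    exact isNoetherian_of_tower A₀ (M := B) this
  -- (3) integrality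
  · intro b hb
    let S : Subalgebra A₀ A :=
      { toSubsemiring := B.toSubsemiring
        algebraMap_mem' := fun r => hAB r.2 }
    have hS : (Subalgebra.toSubmodule S).FG := hfg
    exact IsIntegral.of_mem_of_fg S hS b hb
  -- (4) power-bounded = integral closure
  · intro a
    constructor
    · rintro ⟨M, hM⟩
      have hle : Subalgebra.toSubmodule (Algebra.adjoin A₀ {a}) ≤
          Submodule.span A₀ (↑(Submonoid.closure {a}) : Set A) := by
        rw [Algebra.adjoin_eq_span]
      have hbdadj : ∀ x ∈ Subalgebra.toSubmodule (Algebra.adjoin A₀ {a}),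
          ϖ ^ M * x ∈ A₀ := by
        intro x hx
        refine Submodule.span_induction ?_ ?_ ?_ ?_ (hle hx)
        · rintro y hy
          obtain ⟨n, rfl⟩ := Submonoid.mem_closure_singleton.mp hy
          exact hM n
        · simpa using A₀.zero_mem
        · intro y z _ _ hy hz
          rw [mul_add]; exact A₀.add_mem hy hz
        · intro c y _ hy
          have : ϖ ^ M * (c • y) = (c : A) * (ϖ ^ M * y) := by
            rw [Subring.smul_def, smul_eq_mul]; ring
          rw [this]; exact A₀.mul_mem c.2 hy
      have hadjfg : (Subalgebra.toSubmodule (Algebra.adjoin A₀ {a})).FG :=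
        bounded_submodule_fg A₀ hnoeth ϖ hϖ _ M hbdadj
      exact IsIntegral.of_mem_of_fg _ hadjfg a (Algebra.self_mem_adjoin_singleton A₀ a)
    · intro ha
      have hint : IsIntegral A₀ a := ha
      obtain ⟨s, hs⟩ := hint.fg_adjoin_singleton
      -- choose a bound for each generator
      choose f hf using fun x : A => hcov x
      set M : ℕ := s.sup f with hMdef
      refine ⟨M, fun n => ?_⟩
      have han : a ^ n ∈ Submodule.span A₀ (↑s : Set A) := by
        rw [hs, Subalgebra.mem_toSubmodule]
        exact pow_mem (Algebra.self_mem_adjoin_singleton A₀ a) n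
      refine Submodule.span_induction ?_ ?_ ?_ ?_ han
      · intro y hy
        exact hmono (f y) M y (Finset.le_sup hy) (hf y)
      · simpa using A₀.zero_mem
      · intro y z _ _ hy hz
        rw [mul_add]; exact A₀.add_mem hy hz
      · intro c y _ hy
        have : ϖ ^ M * (c • y) = (c : A) * (ϖ ^ M * y) := by
          rw [Subring.smul_def, smul_eq_mul]; ring
        rw [this]; exact A₀.mul_mem c.2 hy
end
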